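/- If C ⊆ 𝔽₃ⁿ is a self-dual ternary code (C = C⊥), then n ≡ 0 (mod 4). -/
import Mathlib


open Finset

/-- The Hamming weight of a vector over `ZMod 3`. -/
def wt {n : ℕ} (x : Fin n → ZMod 3) : ℕ := (Finset.univ.filter fun i => x i ≠ 0).card

/-- The standard inner product on `Fin n → ZMod 3`. -/
def dot {n : ℕ} (x y : Fin n → ZMod 3) : ZMod 3 := ∑ i, x i * y i

/-- A ternary code is self-orthogonal if all pairs of codewords are orthogonal. -/
def SelfOrth {n : ℕ} (C : Submodule (ZMod 3) (Fin n → ZMod 3)) : Prop :=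
  ∀ x ∈ C, ∀ y ∈ C, dot x y = 0

noncomputable def ω : ℂ := (-1 + Real.sqrt 3 * Complex.I) / 2

lemma hs3 : ((Real.sqrt 3 : ℝ) : ℂ) ^ 2 = 3 := by
  norm_cast
  rw [Real.sq_sqrt] <;> norm_num

lemma hωsum : 1 + ω + ω ^ 2 = 0 := by
  unfold ω
  linear_combination (Complex.I ^ 2 / 4) * hs3 + ((3 : ℂ) / 4) * Complex.I_sq

lemma hω3 : ω ^ 3 = 1 := by linear_combination (ω - 1) * hωsum

lemma hωne : ω ≠ 1 := by
  unfold ω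
  intro h
  have := congrArg Complex.im h
  simp at this

lemma h2ω : 1 + 2 * ω = (Real.sqrt 3 : ℝ) * Complex.I := by
  unfold ω; ring

noncomputable def φ (t : ZMod 3) : ℂ := ω ^ t.val

lemma φ_zero : φ 0 = 1 := by simp [φ]

lemma ωpow_mod (m : ℕ) : ω ^ (m % 3) = ω ^ m := by
  conv_rhs => rw [show m = 3 * (m / 3) + m % 3 from (Nat.div_add_mod m 3).symm]
  rw [pow_add, pow_mul, hω3, one_pow, one_mul]

lemma φ_add (a b : ZMod 3) : φ (a + b) = φ a * φ b := by
  simp only [φ, ZMod.val_add, ωpow_mod, pow_add]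

lemma φ_ne_one {s : ZMod 3} (hs : s ≠ 0) : φ s ≠ 1 := by
  have h12 : s = 1 ∨ s = 2 := by revert s; decide
  have hω2 : ω ^ 2 ≠ 1 := fun h => hωne (by linear_combination (-ω) * h + hω3)
  rcases h12 with h | h <;> subst h
  · simpa [φ, show ((1:ZMod 3)).val = 1 from rfl] using hωne
  · simpa [φ, show ((2:ZMod 3)).val = 2 from rfl] using hω2

lemma dot_expand {n : ℕ} (x c : Fin n → ZMod 3) :
    dot (x + c) (x + c) = dot x x + 2 * dot x c + dot c c := by
  simp only [dot, Pi.add_apply, Finset.mul_sum, ← Finset.sum_add_distrib]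
  exact Finset.sum_congr rfl fun i _ => by ring

lemma dot_add_right {n : ℕ} (x c d : Fin n → ZMod 3) :
    dot x (c + d) = dot x c + dot x d := by
  simp only [dot, Pi.add_apply, mul_add, Finset.sum_add_distrib]

lemma φ_sum {ι : Type*} (s : Finset ι) (g : ι → ZMod 3) :
    φ (∑ i ∈ s, g i) = ∏ i ∈ s, φ (g i) := by
  induction s using Finset.cons_induction with
  | empty => simp [φ_zero]
  | cons a s ha ih => rw [Finset.sum_cons, Finset.prod_cons, φ_add, ih]


/-- If C is a self-dual ternary code of length n, then n is divisible by 4. -/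
theorem ternary_selfDual_length_div_four (n : ℕ)
    (C : Submodule (ZMod 3) (Fin n → ZMod 3))
    (hsd : ∀ x, x ∈ C ↔ ∀ y ∈ C, dot x y = 0) :
    n % 4 = 0 := by
  classical
  haveI : Fintype C := Fintype.ofFinite C
  set N : ℕ := Fintype.card C with hN
  have hN0 : 0 < N := Fintype.card_pos
  set S : ℂ := ∑ x : Fin n → ZMod 3, φ (dot x x) with hS
  have hiso : ∀ c ∈ C, dot c c = 0 := fun c hc => (hsd c).mp hc c hc
  -- character sum over the subgroup C
  have hchar : ∀ x : Fin n → ZMod 3,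
      (∑ c : C, φ (2 * dot x c)) = if x ∈ C then (N : ℂ) else 0 := by
    intro x
    by_cases hx : x ∈ C
    · have h1 : ∀ c : C, φ (2 * dot x c) = 1 := fun c => by
        rw [(hsd x).mp hx c c.2, mul_zero, φ_zero]
      rw [if_pos hx]
      simp [h1, hN]
    · rw [if_neg hx]
      have hex : ∃ c₀ ∈ C, dot x c₀ ≠ 0 := by
        by_contra h; push_neg at h; exact hx ((hsd x).mpr h)
      obtain ⟨c₀, hc₀, hd⟩ := hex
      set T := ∑ c : C, φ (2 * dot x c) with hT
      have hshift : T = φ (2 * dot x c₀) * T := by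
        rw [hT, Finset.mul_sum,
          ← Equiv.sum_comp (Equiv.addRight (⟨c₀, hc₀⟩ : C)) (fun c : C => φ (2 * dot x c))]
        apply Finset.sum_congr rfl
        intro c _
        have hcoe : ((Equiv.addRight (⟨c₀, hc₀⟩ : C) c : C) : Fin n → ZMod 3)
            = (c : Fin n → ZMod 3) + c₀ := rfl
        rw [hcoe, dot_add_right, mul_add, φ_add]
        ring
      have hne : φ (2 * dot x c₀) ≠ 1 := by
        apply φ_ne_one
        intro h
        exact hd ((by decide : ∀ d : ZMod 3, 2 * d = 0 → d = 0) _ h)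
      have h0 : (φ (2 * dot x c₀) - 1) * T = 0 := by linear_combination (-1 : ℂ) * hshift
      rcases mul_eq_zero.mp h0 with h | h
      · exact absurd (sub_eq_zero.mp h) hne
      · exact h
  -- the double-sum identity
  have key : (N : ℂ) * S = (N : ℂ) * (N : ℂ) := by
    have lhs_eq : (∑ c : C, ∑ x : Fin n → ZMod 3, φ (dot (x + (c : Fin n → ZMod 3)) (x + (c : Fin n → ZMod 3)))) = (N : ℂ) * S := by
      have h1 : ∀ c : C, (∑ x : Fin n → ZMod 3, φ (dot (x + (c : Fin n → ZMod 3)) (x + (c : Fin n → ZMod 3)))) = S :=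
        fun c => Equiv.sum_comp (Equiv.addRight (c : Fin n → ZMod 3)) (fun x => φ (dot x x))
      simp [h1, hS, Finset.sum_const, hN, nsmul_eq_mul]
    have rhs_eq : (∑ c : C, ∑ x : Fin n → ZMod 3, φ (dot (x + (c : Fin n → ZMod 3)) (x + (c : Fin n → ZMod 3))))
        = (N : ℂ) * (N : ℂ) := by
      rw [Finset.sum_comm]
      have h2 : ∀ x : Fin n → ZMod 3,
          (∑ c : C, φ (dot (x + (c : Fin n → ZMod 3)) (x + (c : Fin n → ZMod 3)))) = if x ∈ C then (N : ℂ) else 0 := by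
        intro x
        have h3 : (∑ c : C, φ (dot (x + (c : Fin n → ZMod 3)) (x + (c : Fin n → ZMod 3))))
            = φ (dot x x) * ∑ c : C, φ (2 * dot x c) := by
          rw [Finset.mul_sum]
          apply Finset.sum_congr rfl
          intro c _
          rw [dot_expand, hiso c c.2, add_zero, φ_add]
        rw [h3, hchar x]
        by_cases hx : x ∈ C
        · rw [if_pos hx, hiso x hx, φ_zero, one_mul]
        · rw [if_neg hx]; exact mul_zero _
      rw [Finset.sum_congr rfl (fun x _ => h2 x), Finset.sum_ite, Finset.sum_const,
        Finset.sum_const_zero, add_zero, nsmul_eq_mul]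
      congr 2
      rw [hN]
      exact (Fintype.card_subtype _).symm.trans (by congr!)
    rw [← lhs_eq, rhs_eq]
  have hNne : (N : ℂ) ≠ 0 := Nat.cast_ne_zero.mpr hN0.ne'
  have hSN : S = (N : ℂ) := mul_left_cancel₀ hNne key
  -- S as a power of the Gauss sum
  have hSg : S = (∑ t : ZMod 3, φ (t * t)) ^ n := by
    rw [Fintype.sum_pow]
    exact Finset.sum_congr rfl fun x _ => by rw [dot, φ_sum]
  have hg : (∑ t : ZMod 3, φ (t * t)) = (Real.sqrt 3 : ℝ) * Complex.I := by
    rw [show (Finset.univ : Finset (ZMod 3)) = {0, 1, 2} from by decide,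
      Finset.sum_insert (by decide), Finset.sum_insert (by decide), Finset.sum_singleton,
      show (0 : ZMod 3) * 0 = 0 from by decide, show (1 : ZMod 3) * 1 = 1 from by decide,
      show (2 : ZMod 3) * 2 = 1 from by decide, φ_zero,
      show φ 1 = ω from by simp [φ, show ((1 : ZMod 3)).val = 1 from rfl], ← h2ω]
    ring
  set P : ℝ := Real.sqrt 3 ^ n with hPdef
  have hP : 0 < P := pow_pos (Real.sqrt_pos.mpr (by norm_num)) n
  have hfin : (N : ℂ) = (P : ℂ) * Complex.I ^ n := by
    rw [← hSN, hSg, hg, mul_pow, hPdef]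
    push_cast
    ring
  have hImod : Complex.I ^ n = Complex.I ^ (n % 4) := by
    conv_lhs => rw [show n = 4 * (n / 4) + n % 4 from (Nat.div_add_mod n 4).symm]
    rw [pow_add, pow_mul, Complex.I_pow_four, one_pow, one_mul]
  rw [hImod] at hfin
  have hr : n % 4 < 4 := Nat.mod_lt _ (by norm_num)
  interval_cases h : n % 4
  · rfl
  · exfalso
    rw [pow_one] at hfin
    have him := congrArg Complex.im hfin
    simp at him
    linarith
  · exfalso
    rw [Complex.I_sq] at hfin
    have hre := congrArg Complex.re hfin
    simp at hre
    have : (0 : ℝ) ≤ (N : ℝ) := Nat.cast_nonneg _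
    linarith
  · exfalso
    rw [show Complex.I ^ 3 = -Complex.I from by rw [pow_succ, Complex.I_sq]; ring] at hfin
    have him := congrArg Complex.im hfin
    simp at him
    linarith
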